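/- arXiv:1008.0305 — 2 statements merged into one kernel-verified Lean document; each statement's English description precedes it below -/
import Mathlib

section
/- Let (A, ν) be a Noetherian integral domain with a negative pseudovaluation and let a, f ∈ A be nonzero localizing elements. Let ν' be the induced pseudovaluation on the localization A_f, where the parameter d > 0 is chosen at least as large as the constant D appearing in the localizing condition for f. Then the image of a in A_f is localizing with respect to ν'. -/
open scoped Classical

noncomputable section

/-- A pseudovaluation on a commutative ring `A`: a function `ν : A → ℝ ∪ {±∞}` with
`ν 0 = ∞`, `ν 1 = 0`, `ν (a - b) ≥ min (ν a) (ν b)`, and `ν (a*b) ≥ ν a + ν b`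
whenever `ν a ≠ -∞` and `ν b ≠ -∞`. -/
structure IsPseudovaluation {A : Type*} [CommRing A] (ν : A → EReal) : Prop where
  map_zero : ν 0 = ⊤
  map_one : ν 1 = 0
  min_le_sub : ∀ a b : A, min (ν a) (ν b) ≤ ν (a - b)
  add_le_mul : ∀ a b : A, ν a ≠ ⊥ → ν b ≠ ⊥ → ν a + ν b ≤ ν (a * b)

/-- A proper pseudovaluation never takes the value `-∞`. -/
def IsProperPV {A : Type*} [CommRing A] (ν : A → EReal) : Prop :=
  IsPseudovaluation ν ∧ ∀ a : A, ν a ≠ ⊥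

/-- A negative pseudovaluation is proper and satisfies `ν a ≤ 0` for `a ≠ 0`. -/
def IsNegativePV {A : Type*} [CommRing A] (ν : A → EReal) : Prop :=
  IsPseudovaluation ν ∧ (∀ a : A, ν a ≠ ⊥) ∧ ∀ a : A, a ≠ 0 → ν a ≤ 0

/-- `f` is localizing with respect to `ν` if there are `C > 0`, `D ≥ 0` with
`ν (fⁿ x) ≤ C · ν x + n D` for all `n` and `x`. -/
def IsLocalizing {A : Type*} [CommRing A] (ν : A → EReal) (f : A) : Prop :=
  ∃ C D : ℝ, 0 < C ∧ 0 ≤ D ∧ ∀ (n : ℕ) (x : A),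
    ν (f ^ n * x) ≤ (C : EReal) * ν x + (((n : ℝ) * D : ℝ) : EReal)

/-- Two functions `A → ℝ ∪ {±∞}` are linearly equivalent if they dominate each other
up to positive multiplicative and nonnegative additive constants. -/
def LinearlyEquivalent {A : Type*} (ν₁ ν₂ : A → EReal) : Prop :=
  ∃ c₁ c₂ d₁ d₂ : ℝ, 0 < c₁ ∧ 0 < c₂ ∧ 0 ≤ d₁ ∧ 0 ≤ d₂ ∧
    (∀ a : A, (c₂ : EReal) * ν₂ a - (d₂ : EReal) ≤ ν₁ a) ∧
    (∀ a : A, (c₁ : EReal) * ν₁ a - (d₁ : EReal) ≤ ν₂ a)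

/-- The weighted degree pseudovaluation on a multivariate polynomial ring:
`ν (Σ_k c_k T^k) = inf_k { μ(c_k) - Σ_i k_i d_i }`. -/
def weightedDegPV {R : Type*} [CommRing R] (μ : R → EReal) {m : ℕ} (d : Fin m → ℝ)
    (f : MvPolynomial (Fin m) R) : EReal :=
  ⨅ k : Fin m →₀ ℕ, (μ (MvPolynomial.coeff k f) - ((∑ i, (k i : ℝ) * d i : ℝ) : EReal))

/-- A pseudovaluation `τ` on an `R`-algebra `B` is admissible (relative to `μ` on `R`)
if it is the quotient of a weighted degree pseudovaluation under some surjection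
from a polynomial ring. -/
def IsAdmissiblePV {R B : Type*} [CommRing R] [CommRing B] [Algebra R B]
    (μ : R → EReal) (τ : B → EReal) : Prop :=
  ∃ (m : ℕ) (π : MvPolynomial (Fin m) R →ₐ[R] B) (d : Fin m → ℝ),
    Function.Surjective π ∧ (∀ i, 0 < d i) ∧
    ∀ b : B, τ b = ⨆ (f : MvPolynomial (Fin m) R) (_ : π f = b), weightedDegPV μ d f

/-- The pseudovaluation `μ (Σ_i a_i X^i) = min_i { ν(a_i) - i·d }` on `A[X]`. -/
def polyPV {A : Type*} [CommRing A] (ν : A → EReal) (d : ℝ) (g : Polynomial A) : EReal :=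
  ⨅ i : ℕ, (ν (g.coeff i) - (((i : ℝ) * d : ℝ) : EReal))

/-- The induced pseudovaluation on the localization `A_f`: the quotient of `polyPV ν d`
under the map `A[X] → A_f`, `X ↦ f⁻¹`. -/
def locPV {A : Type*} [CommRing A] (ν : A → EReal) (f : A) (d : ℝ)
    (z : Localization.Away f) : EReal :=
  ⨆ (g : Polynomial A)
    (_ : Polynomial.aeval (IsLocalization.Away.invSelf (S := Localization.Away f) f) g = z),
    polyPV ν d g

/-- The Gauss norm `γ_ε(α) = inf_i { i + ε p^{-i} ν(a_i) }` of a Witt vector. -/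
def gaussNorm (p : ℕ) {A : Type*} [CommRing A] (ν : A → EReal) (ε : ℝ)
    (α : WittVector p A) : EReal :=
  ⨅ i : ℕ, ((i : EReal) + ((ε * (p : ℝ) ^ (-(i : ℤ)) : ℝ) : EReal) * ν (α.coeff i))

/-- A Witt vector is overconvergent if `γ_ε(α) ≠ -∞` for some `ε > 0`. -/
def IsOverconvergent (p : ℕ) {A : Type*} [CommRing A] (ν : A → EReal)
    (α : WittVector p A) : Prop :=
  ∃ ε : ℝ, 0 < ε ∧ gaussNorm p ν ε α ≠ ⊥

/-- The trivial valuation on an integral domain: `ν 0 = ∞` and `ν a = 0` for `a ≠ 0`. -/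
def trivialPV (K : Type*) [Zero K] : K → EReal :=
  fun a => if a = 0 then (⊤ : EReal) else 0

/-!
Write `aⁿ x = Σ gₗ f⁻ˡ` with `ν'`-value at least `v`, and let `L = deg g`. Clearing denominators
gives `b = Σ gₗ f^{L-l} ∈ A` with `ν b ≥ v + L ν(f)`. As `A` is Noetherian, the colon ideals
`(a) : fᵏ` stabilise at some `k = e`, so `aⁿ ∣ b f^{ne}`; writing `b f^{ne} = aⁿ c` gives the
representation `x = c / f^{L+ne}`, whence `ν' x ≥ ν c - (L + ne) d`. Now
`v + (L + ne) ν(f) ≤ ν(f^{ne} b) = ν(aⁿ c) ≤ C ν(c) + n D` by the localizing property of `a`,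
and negativity of `ν` at the leading coefficient of `g` gives `v ≤ -L d`, which absorbs the
terms in `L`.
-/

open Polynomial

section Pseudovaluation

variable {A : Type*} [CommRing A] {ν : A → EReal}

theorem IsPseudovaluation.le_neg (hν : IsPseudovaluation ν) (y : A) : ν y ≤ ν (-y) := by
  simpa [hν.map_zero] using hν.min_le_sub 0 y

theorem IsPseudovaluation.min_le_add (hν : IsPseudovaluation ν) (x y : A) :
    min (ν x) (ν y) ≤ ν (x + y) := by
  simpa using (min_le_min_left _ (hν.le_neg y)).trans (hν.min_le_sub x (-y))

theorem IsPseudovaluation.le_sum (hν : IsPseudovaluation ν) {ι : Type*} {s : Finset ι}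
    {t : ι → A} {w : EReal} (h : ∀ i ∈ s, w ≤ ν (t i)) : w ≤ ν (∑ i ∈ s, t i) :=
  Finset.sum_induction t (w ≤ ν ·)
    (fun x y hx hy => (le_min hx hy).trans (hν.min_le_add x y)) (by simp [hν.map_zero]) h

theorem IsProperPV.add_le_pow_mul (hν : IsProperPV ν) {f : A} {vf : ℝ} (hf : ν f = vf)
    (n : ℕ) (x : A) : ((n * vf : ℝ) : EReal) + ν x ≤ ν (f ^ n * x) := by
  induction n generalizing x with
  | zero => simp
  | succ n ih =>
    calc ((((n + 1 : ℕ) : ℝ) * vf : ℝ) : EReal) + ν x = ((n * vf : ℝ) : EReal) + (ν f + ν x) := by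
          rw [hf, ← add_assoc, ← EReal.coe_add]; congr 2; push_cast; ring
      _ ≤ ((n * vf : ℝ) : EReal) + ν (f * x) := by
          gcongr; exact hν.1.add_le_mul f x (hν.2 f) (hν.2 x)
      _ ≤ ν (f ^ (n + 1) * x) := by rw [pow_succ, mul_assoc]; exact ih (f * x)

theorem IsNegativePV.isProperPV (hν : IsNegativePV ν) : IsProperPV ν := ⟨hν.1, hν.2.1⟩

theorem IsNegativePV.coe_toReal (hν : IsNegativePV ν) {x : A} (hx : x ≠ 0) :
    ((ν x).toReal : EReal) = ν x :=
  EReal.coe_toReal (ne_top_of_le_ne_top EReal.zero_ne_top (hν.2.2 x hx)) (hν.2.1 x)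

end Pseudovaluation

section Saturation

variable {A : Type*} [CommRing A]

theorem exists_dvd_mul_pow_of_dvd_mul_pow [IsNoetherianRing A] (a f : A) :
    ∃ e : ℕ, ∀ (b : A) (k : ℕ), a ∣ b * f ^ k → a ∣ b * f ^ e := by
  let I : ℕ →o Ideal A :=
    ⟨fun k => (Ideal.span {a}).colon (Ideal.span {f ^ k}), fun k l hkl b hb => by
      simp only [Ideal.mem_colon_span_singleton, Ideal.mem_span_singleton] at hb ⊢
      exact hb.trans (mul_dvd_mul_left b (pow_dvd_pow f hkl))⟩
  obtain ⟨e, he⟩ := monotone_stabilizes_iff_noetherian.mpr inferInstance I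
  have mem_I {b : A} {k : ℕ} : b ∈ I k ↔ a ∣ b * f ^ k := by
    simp [I, Ideal.mem_span_singleton]
  refine ⟨e, fun b k hb => ?_⟩
  rw [← mem_I, he (max k e) (le_max_right k e)]
  exact I.monotone (le_max_left k e) (mem_I.mpr hb)

theorem pow_dvd_mul_pow_mul_of_dvd_mul_pow [IsDomain A] {a f : A} (ha : a ≠ 0) {e : ℕ}
    (he : ∀ (b : A) (k : ℕ), a ∣ b * f ^ k → a ∣ b * f ^ e) (n : ℕ) (b : A) (k : ℕ)
    (h : a ^ n ∣ b * f ^ k) : a ^ n ∣ b * f ^ (n * e) := by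
  induction n generalizing b with
  | zero => simp
  | succ n ih =>
    obtain ⟨b₁, hb₁⟩ := he b k ((dvd_pow_self a n.succ_ne_zero).trans h)
    obtain ⟨c, hc⟩ := h
    have hb₁k : b₁ * f ^ k = a ^ n * (c * f ^ e) :=
      mul_left_cancel₀ ha (by linear_combination -f ^ k * hb₁ + f ^ e * hc)
    obtain ⟨c₁, hc₁⟩ := ih b₁ ⟨_, hb₁k⟩
    exact ⟨c₁, by rw [add_mul, one_mul, add_comm, pow_add, ← mul_assoc, hb₁, mul_assoc, hc₁]; ring⟩

end Saturation

section InducedPseudovaluation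

variable {A : Type*} [CommRing A] {ν : A → EReal} {d : ℝ}

theorem polyPV_le_coeff (ν : A → EReal) (d : ℝ) (g : A[X]) (i : ℕ) :
    polyPV ν d g ≤ ν (g.coeff i) - ((i * d : ℝ) : EReal) :=
  iInf_le _ i

theorem coe_add_le_coeff {g : A[X]} {v : ℝ} (hv : (v : EReal) ≤ polyPV ν d g) (i : ℕ) :
    ((v + i * d : ℝ) : EReal) ≤ ν (g.coeff i) := by
  have h := hv.trans (polyPV_le_coeff ν d g i)
  rwa [EReal.le_sub_iff_add_le (.inl (EReal.coe_ne_bot _)) (.inl (EReal.coe_ne_top _)),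
    ← EReal.coe_add] at h

theorem le_neg_natDegree_mul (hν : IsNegativePV ν) {g : A[X]} (hg : g ≠ 0) {v : ℝ}
    (hv : (v : EReal) ≤ polyPV ν d g) : v ≤ -(g.natDegree * d) := by
  have h : v + g.natDegree * d ≤ 0 := by
    exact_mod_cast (coe_add_le_coeff hv g.natDegree).trans
      (hν.2.2 _ (leadingCoeff_ne_zero.mpr hg))
  linarith

theorem sub_le_polyPV_monomial (hν : IsPseudovaluation ν) (d : ℝ) (m : ℕ) (c : A) :
    ν c - ((m * d : ℝ) : EReal) ≤ polyPV ν d (monomial m c) := by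
  refine le_iInf fun i => ?_
  rcases eq_or_ne m i with rfl | hmi
  · rw [coeff_monomial_same]
  · rw [coeff_monomial, if_neg hmi, hν.map_zero, EReal.top_sub_coe]
    exact le_top

variable {f : A}

theorem polyPV_le_locPV {z : Localization.Away f} {g : A[X]}
    (hg : aeval (IsLocalization.Away.invSelf (S := Localization.Away f) f) g = z) :
    polyPV ν d g ≤ locPV ν f d z :=
  le_iSup₂ (f := fun g (_ : aeval _ g = z) => polyPV ν d g) g hg

theorem locPV_zero (hν : IsPseudovaluation ν) : locPV ν f d 0 = ⊤ :=
  top_unique <| (le_iInf fun i => by rw [coeff_zero, hν.map_zero, EReal.top_sub_coe]).trans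
    (polyPV_le_locPV (map_zero _))

theorem sub_le_locPV (hν : IsPseudovaluation ν) {z : Localization.Away f} {c : A} {m : ℕ}
    (h : algebraMap A (Localization.Away f) c = z * algebraMap A (Localization.Away f) f ^ m) :
    ν c - ((m * d : ℝ) : EReal) ≤ locPV ν f d z := by
  refine (sub_le_polyPV_monomial hν d m c).trans (polyPV_le_locPV ?_)
  rw [aeval_monomial, h, mul_assoc, ← mul_pow, IsLocalization.Away.mul_invSelf, one_pow, mul_one]

theorem algebraMap_sum_coeff_mul_pow (g : A[X]) :
    algebraMap A (Localization.Away f)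
        (∑ l ∈ Finset.range (g.natDegree + 1), g.coeff l * f ^ (g.natDegree - l)) =
      aeval (IsLocalization.Away.invSelf (S := Localization.Away f) f) g *
        algebraMap A (Localization.Away f) f ^ g.natDegree := by
  rw [aeval_eq_sum_range, Finset.sum_mul, map_sum]
  refine Finset.sum_congr rfl fun l hl => ?_
  rw [← Nat.add_sub_cancel' (Finset.mem_range_succ_iff.mp hl), Nat.add_sub_cancel_left,
    pow_add, Algebra.smul_def, map_mul, map_pow]
  have hu : (algebraMap A (Localization.Away f) f * IsLocalization.Away.invSelf f) ^ l = 1 := by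
    rw [IsLocalization.Away.mul_invSelf, one_pow]
  linear_combination -algebraMap A _ (g.coeff l) * algebraMap A _ f ^ (g.natDegree - l) * hu

theorem coe_add_le_sum_coeff_mul_pow (hν : IsProperPV ν) {vf : ℝ} (hf : ν f = vf)
    (hvf : vf ≤ d) {g : A[X]} {v : ℝ} (hv : (v : EReal) ≤ polyPV ν d g) :
    ((v + g.natDegree * vf : ℝ) : EReal) ≤
      ν (∑ l ∈ Finset.range (g.natDegree + 1), g.coeff l * f ^ (g.natDegree - l)) := by
  refine hν.1.le_sum fun l hl => ?_
  have hlL : l ≤ g.natDegree := Finset.mem_range_succ_iff.mp hl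
  calc ((v + g.natDegree * vf : ℝ) : EReal)
      ≤ (((g.natDegree - l : ℕ) * vf : ℝ) : EReal) + ((v + l * d : ℝ) : EReal) := by
        rw [← EReal.coe_add, EReal.coe_le_coe_iff, Nat.cast_sub hlL]
        nlinarith [mul_nonneg (Nat.cast_nonneg (α := ℝ) l) (sub_nonneg.mpr hvf)]
    _ ≤ (((g.natDegree - l : ℕ) * vf : ℝ) : EReal) + ν (g.coeff l) := by
        gcongr; exact coe_add_le_coeff hv l
    _ ≤ ν (g.coeff l * f ^ (g.natDegree - l)) := by
        rw [mul_comm (g.coeff l)]; exact hν.add_le_pow_mul hf _ _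

theorem exists_algebraMap_eq_mul_pow [IsDomain A] {a : A} (ha : a ≠ 0) (hf : f ≠ 0) {e : ℕ}
    (he : ∀ (b : A) (k : ℕ), a ∣ b * f ^ k → a ∣ b * f ^ e) {x : Localization.Away f} {b : A}
    {n L : ℕ} (hb : algebraMap A (Localization.Away f) b =
      algebraMap A (Localization.Away f) a ^ n * x * algebraMap A (Localization.Away f) f ^ L) :
    ∃ c : A, algebraMap A (Localization.Away f) c =
        x * algebraMap A (Localization.Away f) f ^ (L + n * e) ∧ f ^ (n * e) * b = a ^ n * c := by
  have hpowers := powers_le_nonZeroDivisors_of_noZeroDivisors hf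
  have hinj := IsLocalization.injective (Localization.Away f) hpowers
  have := IsLocalization.isDomain_localization hpowers
  obtain ⟨s, c₀, hc₀⟩ := IsLocalization.Away.surj f x
  obtain ⟨c, hc⟩ := pow_dvd_mul_pow_mul_of_dvd_mul_pow ha he n b s
    ⟨c₀ * f ^ L, hinj (by simp only [map_mul, map_pow, hb, ← hc₀]; ring)⟩
  refine ⟨c, mul_left_cancel₀ (pow_ne_zero n ((map_ne_zero_iff _ hinj).mpr ha)) ?_,
    by rw [mul_comm, hc]⟩
  rw [← map_pow, ← map_mul, ← hc, map_mul, hb]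
  simp only [map_pow]
  ring

theorem exists_le_locPV_of_le_polyPV [IsDomain A] (hν : IsNegativePV ν) {a : A} (ha : a ≠ 0)
    (hf : f ≠ 0) {Ca Da : ℝ} (hCa : 0 ≤ Ca) (hloc : ∀ (n : ℕ) (x : A),
      ν (a ^ n * x) ≤ (Ca : EReal) * ν x + (((n : ℝ) * Da : ℝ) : EReal)) {e : ℕ}
    (he : ∀ (b : A) (k : ℕ), a ∣ b * f ^ k → a ∣ b * f ^ e) (hd : 0 < d) {n : ℕ}
    {x : Localization.Away f} (hx : x ≠ 0) {g : A[X]}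
    (hg : aeval (IsLocalization.Away.invSelf (S := Localization.Away f) f) g =
      algebraMap A (Localization.Away f) a ^ n * x) {v : ℝ} (hv : (v : EReal) ≤ polyPV ν d g) :
    ∃ P : ℝ, (P : EReal) ≤ locPV ν f d x ∧
      ((1 + Ca) * d - (ν f).toReal) * v ≤
        Ca * d * P + n * d * (e * (Ca * d - (ν f).toReal) + Da) := by
  set vf := (ν f).toReal
  have hvf : ν f = vf := (hν.coe_toReal hf).symm
  have hvf0 : vf ≤ 0 := EReal.toReal_nonpos (hν.2.2 f hf)
  obtain ⟨c, hc, hbc⟩ := exists_algebraMap_eq_mul_pow ha hf he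
    (by rw [algebraMap_sum_coeff_mul_pow, hg])
  have hc0 : c ≠ 0 := by
    rintro rfl
    rw [map_zero] at hc
    exact hx (((IsLocalization.Away.algebraMap_isUnit f).pow _).mul_left_eq_zero.mp hc.symm)
  have hg0 : g ≠ 0 := by
    rintro rfl
    simp [ha, hc0] at hbc
  set L := g.natDegree
  set vc := (ν c).toReal
  refine ⟨vc - (L + n * e) * d, ?_, ?_⟩
  · have h := sub_le_locPV (d := d) hν.1 hc
    rwa [← hν.coe_toReal hc0, ← EReal.coe_sub, Nat.cast_add, Nat.cast_mul] at h
  have hlow : ((v + (L + n * e) * vf : ℝ) : EReal) ≤ ν (a ^ n * c) := by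
    rw [← hbc]
    calc ((v + (L + n * e) * vf : ℝ) : EReal)
        = (((n * e : ℕ) * vf : ℝ) : EReal) + ((v + L * vf : ℝ) : EReal) := by
          rw [← EReal.coe_add]; congr 1; push_cast; ring
      _ ≤ (((n * e : ℕ) * vf : ℝ) : EReal) + ν _ := by
          gcongr; exact coe_add_le_sum_coeff_mul_pow hν.isProperPV hvf (hvf0.trans hd.le) hv
      _ ≤ _ := hν.isProperPV.add_le_pow_mul hvf _ _
  have hup := hloc n c
  rw [← hν.coe_toReal hc0, ← EReal.coe_mul, ← EReal.coe_add] at hup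
  have h₁ : v + (L + n * e) * vf ≤ Ca * vc + n * Da := by exact_mod_cast hlow.trans hup
  have h₂ : v ≤ -(L * d) := le_neg_natDegree_mul hν hg0 hv
  have hk : 0 ≤ Ca * d - vf := by nlinarith
  nlinarith [mul_le_mul_of_nonneg_left h₁ hd.le, mul_le_mul_of_nonneg_left h₂ hk]

end InducedPseudovaluation

theorem statement10_general (A : Type*) [CommRing A] [IsDomain A] [IsNoetherianRing A]
    (ν : A → EReal) (hν : IsNegativePV ν)
    (a f : A) (ha0 : a ≠ 0) (hf0 : f ≠ 0)
    (haloc : IsLocalizing ν a)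
    (d : ℝ) (hd : 0 < d) :
    IsLocalizing (locPV ν f d) (algebraMap A (Localization.Away f) a) := by
  obtain ⟨Ca, Da, hCa, hDa, hloc⟩ := haloc
  obtain ⟨e, he⟩ := exists_dvd_mul_pow_of_dvd_mul_pow a f
  set k := Ca * d - (ν f).toReal
  set M := (1 + Ca) * d - (ν f).toReal
  have hvf : (ν f).toReal ≤ 0 := EReal.toReal_nonpos (hν.2.2 f hf0)
  have hk : 0 < k := by nlinarith
  have hM : 0 < M := by nlinarith
  refine ⟨Ca * d / M, d * (e * k + Da) / M, by positivity, by positivity, fun n x => ?_⟩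
  rcases eq_or_ne x 0 with rfl | hx
  · rw [mul_zero, locPV_zero hν.1, EReal.coe_mul_top_of_pos (by positivity), EReal.top_add_coe]
  refine iSup₂_le fun g hg => EReal.ge_of_forall_gt_iff_ge.1 fun v hv => ?_
  obtain ⟨P, hP, hvP⟩ :=
    exists_le_locPV_of_le_polyPV hν ha0 hf0 hCa.le hloc he hd hx hg hv.le
  calc (v : EReal) ≤ ((Ca * d / M * P + n * (d * (e * k + Da) / M) : ℝ) : EReal) := by
        rw [EReal.coe_le_coe_iff, ← mul_div_right_comm, mul_div_assoc', ← add_div,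
          le_div_iff₀ hM]
        linarith
    _ ≤ _ := by
        rw [EReal.coe_add, EReal.coe_mul]
        gcongr

/-- In a Noetherian integral domain with a negative pseudovaluation, if
`a` and `f` are nonzero localizing elements (with `f` localizing with constants `C, D`)
and `d ≥ D`, `d > 0`, then the image of `a` in `A_f` is localizing with respect to the
induced pseudovaluation `ν'`. -/
theorem statement10 (A : Type*) [CommRing A] [IsDomain A] [IsNoetherianRing A]
    (ν : A → EReal) (hν : IsNegativePV ν)
    (a f : A) (ha0 : a ≠ 0) (hf0 : f ≠ 0)
    (haloc : IsLocalizing ν a)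
    (C D : ℝ) (hC : 0 < C) (hD : 0 ≤ D)
    (hfloc : ∀ (n : ℕ) (x : A),
      ν (f ^ n * x) ≤ (C : EReal) * ν x + (((n : ℝ) * D : ℝ) : EReal))
    (d : ℝ) (hd : 0 < d) (hdD : D ≤ d) :
    IsLocalizing (locPV ν f d) (algebraMap A (Localization.Away f) a) :=
  statement10_general A ν hν a f ha0 hf0 haloc d hd
end
end

section
/- Let p be a prime and let (A, ν) be a commutative ring with pA = 0 and a negative pseudovaluation. Let f ∈ A be localizing with constants C > 0 and D ≥ 0, and let ν' be the induced pseudovaluation on A_f with parameter d ≥ D, d > 0. If c ∈ W(A) is a Witt vector whose image in W(A_f) is overconvergent with respect to ν', then c is overconvergent with respect to ν. -/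
open scoped Classical

noncomputable section

/-! If `a/1 = Σ_j g_j f^{-j}` in `A_f` with `ν(g_j) ≥ r + j d`, clear denominators:
`fⁿ a = Σ_j g_j f^{n-j}` with `n = deg g`, so `ν(fⁿ a) ≥ r + nφ` for a real `φ ≤ ν f` with `φ ≤ min(d, D)`,
and the localizing bound gives `C ν(a) ≥ r + n(φ - D)`. Since `ν` is negative, the leading
coefficient forces `n d ≤ -r`, whence `ν'(a/1) ≤ L ν(a)` with `L = dC/(d + D - φ) > 0`.
This linear comparison of `ν'` on `A` with `ν` gives `γ_{εL}(c) ≥ γ_ε(c|A_f)` for Gauss norms. -/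

open Polynomial Finset

namespace IsPseudovaluation

variable {A : Type*} [CommRing A] {ν : A → EReal}

theorem le_neg_s13 (hν : IsPseudovaluation ν) (b : A) : ν b ≤ ν (-b) := by
  simpa [hν.map_zero] using hν.min_le_sub 0 b

theorem min_le_add_s13 (hν : IsPseudovaluation ν) (a b : A) : min (ν a) (ν b) ≤ ν (a + b) := by
  simpa using (min_le_min_left _ (hν.le_neg_s13 b)).trans (hν.min_le_sub a (-b))

theorem le_sum_s13 (hν : IsPseudovaluation ν) {ι : Type*} {t : EReal} (s : Finset ι) (F : ι → A)
    (hF : ∀ j ∈ s, t ≤ ν (F j)) : t ≤ ν (∑ j ∈ s, F j) := by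
  induction s using Finset.induction_on with
  | empty => simp [hν.map_zero]
  | insert a s ha ih =>
    rw [sum_insert ha]
    exact (le_min (hF a (mem_insert_self a s)) (ih fun j hj => hF j (mem_insert_of_mem hj))).trans
      (hν.min_le_add_s13 _ _)

theorem natCast_mul_le_pow (hν : IsPseudovaluation ν) (hbot : ∀ a, ν a ≠ ⊥) {f : A} {φ : ℝ}
    (hφ : (φ : EReal) ≤ ν f) (m : ℕ) : ((m * φ : ℝ) : EReal) ≤ ν (f ^ m) := by
  induction m with
  | zero => simp [hν.map_one]
  | succ m ih =>
    calc (((m + 1 : ℕ) * φ : ℝ) : EReal) = φ + ((m * φ : ℝ) : EReal) := by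
          rw [← EReal.coe_add, EReal.coe_eq_coe_iff]; push_cast; ring
      _ ≤ ν f + ν (f ^ m) := add_le_add hφ ih
      _ ≤ ν (f ^ (m + 1)) := pow_succ' f m ▸ hν.add_le_mul _ _ (hbot f) (hbot _)

theorem le_sum_coeff_mul_pow (hν : IsPseudovaluation ν) (hbot : ∀ a, ν a ≠ ⊥) {f : A}
    {φ d r : ℝ} (hφ : (φ : EReal) ≤ ν f) (hφd : φ ≤ d) {g : A[X]}
    (hr : ∀ j : ℕ, ((r + j * d : ℝ) : EReal) ≤ ν (g.coeff j)) (n : ℕ) :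
    ((r + n * φ : ℝ) : EReal) ≤ ν (∑ j ∈ range (n + 1), g.coeff j * f ^ (n - j)) := by
  refine hν.le_sum_s13 _ _ fun j hj => ?_
  have hjn : j ≤ n := Nat.lt_succ_iff.mp (mem_range.mp hj)
  have hreal : r + n * φ ≤ (r + j * d) + (n - j : ℕ) * φ := by
    rw [Nat.cast_sub hjn]
    nlinarith [(Nat.cast_nonneg j : (0 : ℝ) ≤ j)]
  calc ((r + n * φ : ℝ) : EReal) ≤ ((r + j * d : ℝ) : EReal) + (((n - j : ℕ) * φ : ℝ) : EReal) := by
        rw [← EReal.coe_add]; exact_mod_cast hreal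
    _ ≤ ν (g.coeff j) + ν (f ^ (n - j)) := add_le_add (hr j) (hν.natCast_mul_le_pow hbot hφ _)
    _ ≤ ν (g.coeff j * f ^ (n - j)) := hν.add_le_mul _ _ (hbot _) (hbot _)

end IsPseudovaluation

theorem pow_natDegree_mul_eq_sum_of_aeval_invSelf {A : Type*} [CommRing A] {f a : A} {g : A[X]}
    (hfi : Function.Injective (algebraMap A (Localization.Away f)))
    (hg : aeval (IsLocalization.Away.invSelf (S := Localization.Away f) f) g
      = algebraMap A (Localization.Away f) a) :
    f ^ g.natDegree * a = ∑ j ∈ range (g.natDegree + 1), g.coeff j * f ^ (g.natDegree - j) := by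
  set ι := algebraMap A (Localization.Away f)
  set u := IsLocalization.Away.invSelf (S := Localization.Away f) f
  apply hfi
  rw [map_mul, map_pow, map_sum, ← hg, aeval_eq_sum_range, mul_sum]
  refine sum_congr rfl fun j hj => ?_
  have hfu : ι f ^ j * u ^ j = 1 := by rw [← mul_pow, IsLocalization.Away.mul_invSelf, one_pow]
  rw [map_mul, map_pow, Algebra.smul_def,
    ← Nat.sub_add_cancel (Nat.lt_succ_iff.mp (mem_range.mp hj)), pow_add, Nat.add_sub_cancel]
  linear_combination (ι (g.coeff j) * ι f ^ (g.natDegree - j)) * hfu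

namespace IsNegativePV

variable {A : Type*} [CommRing A] {ν : A → EReal} {f : A} {C D d φ : ℝ}

theorem coe_le_mul_of_aeval_invSelf (hν : IsNegativePV ν)
    (hfi : Function.Injective (algebraMap A (Localization.Away f))) (hC : 0 < C) (hd : 0 < d)
    (hloc : ∀ (n : ℕ) (x : A),
      ν (f ^ n * x) ≤ (C : EReal) * ν x + (((n : ℝ) * D : ℝ) : EReal))
    (hφ : (φ : EReal) ≤ ν f) (hφD : φ ≤ D) (hφd : φ ≤ d) {a : A} {g : A[X]} {r : ℝ}
    (hg : aeval (IsLocalization.Away.invSelf (S := Localization.Away f) f) g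
      = algebraMap A (Localization.Away f) a)
    (hr : ∀ j : ℕ, ((r + j * d : ℝ) : EReal) ≤ ν (g.coeff j)) :
    (r : EReal) ≤ ((d * C / (d + D - φ) : ℝ) : EReal) * ν a := by
  obtain ⟨hpv, hbot, hneg⟩ := hν
  have hden : 0 < d + D - φ := by linarith
  obtain hνa | hνa := eq_or_ne (ν a) ⊤
  · rw [hνa, EReal.coe_mul_top_of_pos (by positivity)]
    exact le_top
  have hg0 : g ≠ 0 := by
    rintro rfl
    have ha : a = 0 := hfi (by rw [map_zero, ← hg, map_zero])
    exact hνa (ha ▸ hpv.map_zero)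
  set n := g.natDegree
  have hdeg : n * d ≤ -r := by
    have h := (hr n).trans (hneg _ (leadingCoeff_ne_zero.mpr hg0))
    have : r + n * d ≤ 0 := by exact_mod_cast h
    linarith
  lift ν a to ℝ using ⟨hνa, hbot a⟩ with v hv
  have hbound : r + n * φ ≤ C * v + n * D := by
    have h := (hpv.le_sum_coeff_mul_pow hbot hφ hφd hr n).trans
      (pow_natDegree_mul_eq_sum_of_aeval_invSelf hfi hg ▸ hloc n a)
    rw [← hv] at h
    exact_mod_cast h
  rw [← EReal.coe_mul, EReal.coe_le_coe_iff, div_mul_eq_mul_div, le_div_iff₀ hden]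
  nlinarith [mul_le_mul_of_nonpos_right hdeg (by linarith : φ - D ≤ 0)]

theorem locPV_algebraMap_le (hν : IsNegativePV ν)
    (hfi : Function.Injective (algebraMap A (Localization.Away f))) (hC : 0 < C) (hd : 0 < d)
    (hloc : ∀ (n : ℕ) (x : A),
      ν (f ^ n * x) ≤ (C : EReal) * ν x + (((n : ℝ) * D : ℝ) : EReal))
    (hφ : (φ : EReal) ≤ ν f) (hφD : φ ≤ D) (hφd : φ ≤ d) (a : A) :
    locPV ν f d (algebraMap A (Localization.Away f) a)
      ≤ ((d * C / (d + D - φ) : ℝ) : EReal) * ν a := by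
  refine iSup₂_le fun g hg => EReal.ge_of_forall_gt_iff_ge.mp fun r hr => ?_
  refine hν.coe_le_mul_of_aeval_invSelf hfi hC hd hloc hφ hφD hφd hg fun j => ?_
  rw [EReal.coe_add]
  exact EReal.add_le_of_le_sub (hr.le.trans (iInf_le _ j))

end IsNegativePV

section WittVector

variable {p : ℕ} [Fact p.Prime] {A B : Type*} [CommRing A] [CommRing B] (φ : A →+* B)
  {μ : B → EReal} {ν : A → EReal} {L : ℝ}

theorem gaussNorm_map_le {ε : ℝ} (hε : 0 ≤ ε) (h : ∀ a, μ (φ a) ≤ L * ν a)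
    (c : WittVector p A) :
    gaussNorm p μ ε (WittVector.map φ c) ≤ gaussNorm p ν (ε * L) c := by
  refine iInf_mono fun i => add_le_add le_rfl ?_
  rw [WittVector.map_coeff]
  have hq : (0 : EReal) ≤ ((ε * (p : ℝ) ^ (-(i : ℤ)) : ℝ) : EReal) := by
    exact_mod_cast (by positivity : 0 ≤ ε * (p : ℝ) ^ (-(i : ℤ)))
  calc ((ε * (p : ℝ) ^ (-(i : ℤ)) : ℝ) : EReal) * μ (φ (c.coeff i))
      ≤ ((ε * (p : ℝ) ^ (-(i : ℤ)) : ℝ) : EReal) * (L * ν (c.coeff i)) :=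
        mul_le_mul_of_nonneg_left (h _) hq
    _ = ((ε * L * (p : ℝ) ^ (-(i : ℤ)) : ℝ) : EReal) * ν (c.coeff i) := by
        rw [← mul_assoc, ← EReal.coe_mul, mul_right_comm]

theorem IsOverconvergent.of_map (hL : 0 < L) (h : ∀ a, μ (φ a) ≤ L * ν a) {c : WittVector p A}
    (hc : IsOverconvergent p μ (WittVector.map φ c)) : IsOverconvergent p ν c := by
  obtain ⟨ε, hε, hne⟩ := hc
  exact ⟨ε * L, by positivity,
    fun hbot => hne (le_bot_iff.mp (hbot ▸ gaussNorm_map_le φ hε.le h c))⟩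

end WittVector

theorem statement13_general (p : ℕ) [Fact p.Prime] (A : Type*) [CommRing A]
    (ν : A → EReal) (hν : IsNegativePV ν)
    (f : A) (hf : f ∈ nonZeroDivisors A)
    (C D : ℝ) (hC : 0 < C) (hD : 0 ≤ D)
    (hloc : ∀ (n : ℕ) (x : A),
      ν (f ^ n * x) ≤ (C : EReal) * ν x + (((n : ℝ) * D : ℝ) : EReal))
    (d : ℝ) (hd : 0 < d)
    (c : WittVector p A)
    (hc : IsOverconvergent p (locPV ν f d)
      (WittVector.map (algebraMap A (Localization.Away f)) c)) :
    IsOverconvergent p ν c := by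
  have hfi : Function.Injective (algebraMap A (Localization.Away f)) :=
    IsLocalization.injective _ (Submonoid.powers_le.mpr hf)
  set φ := min (ν f).toReal 0
  have hφ : (φ : EReal) ≤ ν f :=
    (EReal.coe_le_coe_iff.mpr (min_le_left _ _)).trans (EReal.coe_toReal_le (hν.2.1 f))
  have hφ0 : φ ≤ 0 := min_le_right _ _
  exact hc.of_map _ (div_pos (by positivity) (by linarith))
    (hν.locPV_algebraMap_le hfi hC hd hloc hφ (by linarith) (by linarith))

/-- Let `(A, ν)` have `pA = 0` and a negative pseudovaluation, let `f` be
localizing with constants `C, D`, and let `ν'` be the induced pseudovaluation on `A_f`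
with parameter `d ≥ D`, `d > 0`.  If the image in `W(A_f)` of a Witt vector
`c ∈ W(A)` is overconvergent with respect to `ν'`, then `c` is overconvergent with
respect to `ν`. -/
theorem statement13 (p : ℕ) [Fact p.Prime] (A : Type*) [CommRing A]
    (hpA : ((p : ℕ) : A) = 0)
    (ν : A → EReal) (hν : IsNegativePV ν)
    (f : A) (hf : f ∈ nonZeroDivisors A)
    (C D : ℝ) (hC : 0 < C) (hD : 0 ≤ D)
    (hloc : ∀ (n : ℕ) (x : A),
      ν (f ^ n * x) ≤ (C : EReal) * ν x + (((n : ℝ) * D : ℝ) : EReal))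
    (d : ℝ) (hd : 0 < d) (hdD : D ≤ d)
    (c : WittVector p A)
    (hc : IsOverconvergent p (locPV ν f d)
      (WittVector.map (algebraMap A (Localization.Away f)) c)) :
    IsOverconvergent p ν c :=
  statement13_general p A ν hν f hf C D hC hD hloc d hd c hc
end
end
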